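/- arXiv:2411.04485 — 2 statements merged into one kernel-verified Lean document; each statement's English description precedes it below -/
import Mathlib

section
/- Let $\mathsf{M}$ be a $d\times d$ integer dilation matrix and $a$ a finitely supported $\mathsf{M}$-interpolatory filter (i.e., $a(\mathsf{M}k) = |\det\mathsf{M}|^{-1}\delta(k)$) with $\widehat{a}(0)=1$. If $a$ has sum rules of order $m$ with respect to $\mathsf{M}$, i.e., all partial derivatives of $\widehat{a}$ of order less than $m$ vanish at $2\pi\omega$ for every $\omega \in \Omega_{\mathsf{M}}\setminus\{0\}$, then $a$ has $m$ linear-phase moments, i.e., $\partial^\mu(\widehat{a}-1)(0) = 0$ for all multi-indices $\mu$ with $|\mu| < m$. -/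
open scoped BigOperators Classical
open Asymptotics Filter Matrix

noncomputable section

/-- Real cast of an integer vector. -/
def zr {d : ℕ} (k : Fin d → ℤ) : Fin d → ℝ := fun i => (k i : ℝ)

/-- Fourier series `û(ξ) = ∑_k u(k) e^{-i k·ξ}` of a filter on `ℤ^d`. -/
def fhat {d : ℕ} (a : (Fin d → ℤ) → ℂ) (ξ : Fin d → ℝ) : ℂ :=
  ∑' k : Fin d → ℤ, a k * Complex.exp (-Complex.I * ((∑ i, (k i : ℝ) * ξ i : ℝ) : ℂ))

/-- `d_M = |det M|`. -/
def dm {d : ℕ} (M : Matrix (Fin d) (Fin d) ℤ) : ℕ := M.det.natAbs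

/-- A dilation matrix: integer matrix whose (complex) eigenvalues all exceed 1 in modulus. -/
def IsDilation {d : ℕ} (M : Matrix (Fin d) (Fin d) ℤ) : Prop :=
  M.det ≠ 0 ∧ ∀ z : ℂ, (M.map (Int.cast : ℤ → ℂ)).charpoly.IsRoot z → 1 < ‖z‖

/-- The real matrix associated with an integer matrix. -/
def Mr {d : ℕ} (M : Matrix (Fin d) (Fin d) ℤ) : Matrix (Fin d) (Fin d) ℝ :=
  M.map (Int.cast : ℤ → ℝ)

/-- `M`-interpolatory filter: `a(Mk) = d_M⁻¹ δ(k)`. -/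
def Interp {d : ℕ} (M : Matrix (Fin d) (Fin d) ℤ) (a : (Fin d → ℤ) → ℂ) : Prop :=
  ∀ k : Fin d → ℤ, a (M.mulVec k) = ((dm M : ℂ))⁻¹ * (if k = 0 then 1 else 0)

/-- Coset filter `u^{[γ,M]}(k) = u(γ + Mk)`. -/
def coset {d : ℕ} (M : Matrix (Fin d) (Fin d) ℤ) (γ : Fin d → ℤ)
    (a : (Fin d → ℤ) → ℂ) : (Fin d → ℤ) → ℂ := fun k => a (γ + M.mulVec k)

/-! For each `k ∈ ℤ^d` the character sum `∑_{ω ∈ Ω_M} e^{-2πi k·ω}` vanishes unless `k ∈ Mℤ^d`,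
and interpolation kills `a(k)` for `k ∈ Mℤ^d \ {0}`. Hence the periodization
`∑_{ω ∈ Ω_M} â(ξ + 2πω)` is the constant `a(0) |Ω_M|`, which is `â(0) = 1` since `â` vanishes at the
points `2πω`, `ω ≠ 0`. So `â - 1 = -∑_{ω ≠ 0} â(· + 2πω)`, and by the sum rules every derivative
of order `< m` of the right-hand side vanishes at `0`. -/

open Real

def expNegI (t : ℝ) : ℂ := Complex.exp (-Complex.I * t)

lemma expNegI_zero : expNegI 0 = 1 := by
  simp [expNegI]

lemma expNegI_add (s t : ℝ) : expNegI (s + t) = expNegI s * expNegI t := by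
  simp only [expNegI, Complex.ofReal_add, mul_add, Complex.exp_add]

lemma expNegI_two_pi_mul_eq_one_iff (t : ℝ) : expNegI (2 * π * t) = 1 ↔ ∃ n : ℤ, t = n := by
  rw [expNegI, Complex.exp_eq_one_iff]
  constructor
  · rintro ⟨n, hn⟩
    refine ⟨-n, ?_⟩
    have him := congrArg Complex.im hn
    simp [Complex.mul_im] at him
    push_cast
    nlinarith [pi_pos]
  · rintro ⟨n, rfl⟩
    exact ⟨-n, by push_cast; ring⟩

lemma Int.fract_fract_add_sub (a b : ℝ) : Int.fract (Int.fract (a + b) - b) = Int.fract a := by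
  rw [← Int.self_sub_floor (a + b), show a + b - ⌊a + b⌋ - b = a - ⌊a + b⌋ by ring,
    Int.fract_sub_intCast]

section IntVectors

variable {d : ℕ}

lemma zr_injective : Function.Injective (zr (d := d)) := fun k l h =>
  funext fun i => by simpa [zr] using congrFun h i

lemma zr_zero : zr (0 : Fin d → ℤ) = 0 := by
  funext i; simp [zr]

lemma zr_add (k l : Fin d → ℤ) : zr (k + l) = zr k + zr l := by
  funext i; simp [zr]

lemma zr_sub (k l : Fin d → ℤ) : zr (k - l) = zr k - zr l := by
  funext i; simp [zr]

lemma zr_dotProduct_zr (k l : Fin d → ℤ) : zr k ⬝ᵥ zr l = ((k ⬝ᵥ l : ℤ) : ℝ) := by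
  simp [zr, dotProduct]

lemma zr_mulVec (M : Matrix (Fin d) (Fin d) ℤ) (l : Fin d → ℤ) :
    zr (M *ᵥ l) = Mr M *ᵥ zr l := by
  funext i; simp [Mr, zr, mulVec, dotProduct]

lemma zr_floor_add_fract (x : Fin d → ℝ) : zr (fun i => ⌊x i⌋) + Int.fract ∘ x = x := by
  funext i; simp [zr]

lemma isUnit_det_Mr {M : Matrix (Fin d) (Fin d) ℤ} (hdet : M.det ≠ 0) : IsUnit (Mr M).det := by
  rw [show (Mr M).det = (M.det : ℝ) from (RingHom.map_det (Int.castRingHom ℝ) M).symm]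
  exact isUnit_iff_ne_zero.mpr (by exact_mod_cast hdet)

lemma expNegI_two_pi_dotProduct_add_zr (k l : Fin d → ℤ) (x : Fin d → ℝ) :
    expNegI (2 * π * (zr k ⬝ᵥ (x + zr l))) = expNegI (2 * π * (zr k ⬝ᵥ x)) := by
  rw [dotProduct_add, mul_add, expNegI_add, zr_dotProduct_zr,
    (expNegI_two_pi_mul_eq_one_iff _).2 ⟨_, rfl⟩, mul_one]

lemma expNegI_two_pi_dotProduct_fract (k : Fin d → ℤ) (x : Fin d → ℝ) :
    expNegI (2 * π * (zr k ⬝ᵥ (Int.fract ∘ x))) = expNegI (2 * π * (zr k ⬝ᵥ x)) := by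
  conv_rhs => rw [← zr_floor_add_fract x, add_comm]
  rw [expNegI_two_pi_dotProduct_add_zr]

end IntVectors

section DualLattice

variable {d : ℕ} {M : Matrix (Fin d) (Fin d) ℤ} {Ω : Finset (Fin d → ℝ)}

def InDualLattice (M : Matrix (Fin d) (Fin d) ℤ) (x : Fin d → ℝ) : Prop :=
  ∃ k : Fin d → ℤ, (Mr M)ᵀ *ᵥ x = zr k

-- `Ω` is the paper's `Ω_M = M^{-T}ℤ^d ∩ [0,1)^d`, a set of representatives of `M^{-T}ℤ^d / ℤ^d`.
def IsDualCosetReps (M : Matrix (Fin d) (Fin d) ℤ) (Ω : Finset (Fin d → ℝ)) : Prop :=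
  ∀ x : Fin d → ℝ, x ∈ Ω ↔ (InDualLattice M x ∧ ∀ i, 0 ≤ x i ∧ x i < 1)

lemma InDualLattice.add {x y : Fin d → ℝ} (hx : InDualLattice M x) (hy : InDualLattice M y) :
    InDualLattice M (x + y) := by
  obtain ⟨k, hk⟩ := hx
  obtain ⟨l, hl⟩ := hy
  exact ⟨k + l, by rw [mulVec_add, hk, hl, zr_add]⟩

lemma InDualLattice.sub {x y : Fin d → ℝ} (hx : InDualLattice M x) (hy : InDualLattice M y) :
    InDualLattice M (x - y) := by
  obtain ⟨k, hk⟩ := hx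
  obtain ⟨l, hl⟩ := hy
  exact ⟨k - l, by rw [mulVec_sub, hk, hl, zr_sub]⟩

lemma inDualLattice_zr (n : Fin d → ℤ) : InDualLattice M (zr n) :=
  ⟨Mᵀ *ᵥ n, (zr_mulVec Mᵀ n).symm⟩

-- Pairing `k` with the columns of `M^{-T}` gives the coordinates of `M⁻¹ k`.
lemma exists_mulVec_eq_of_dotProduct_int (hdet : M.det ≠ 0) {k : Fin d → ℤ}
    (h : ∀ x, InDualLattice M x → ∃ n : ℤ, zr k ⬝ᵥ x = n) : ∃ l, M *ᵥ l = k := by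
  set A := Mr M
  have hA : IsUnit A.det := isUnit_det_Mr hdet
  have hAT : IsUnit Aᵀ.det := by rwa [det_transpose]
  have hcoord : ∀ j, ∃ n : ℤ, (A⁻¹ *ᵥ zr k) j = n := by
    intro j
    set x := Aᵀ⁻¹ *ᵥ Pi.single j 1
    have hx : Aᵀ *ᵥ x = Pi.single j 1 := by
      rw [mulVec_mulVec, mul_nonsing_inv _ hAT, one_mulVec]
    obtain ⟨n, hn⟩ := h x ⟨Pi.single j 1, by rw [hx]; funext i; simp [zr, Pi.single_apply]⟩
    refine ⟨n, ?_⟩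
    calc (A⁻¹ *ᵥ zr k) j = (A⁻¹ *ᵥ zr k) ⬝ᵥ (Aᵀ *ᵥ x) := by
          rw [hx, dotProduct_single, mul_one]
      _ = zr k ⬝ᵥ x := by
          rw [dotProduct_mulVec, vecMul_transpose, mulVec_mulVec, mul_nonsing_inv _ hA,
            one_mulVec]
      _ = n := hn
  choose l hl using hcoord
  refine ⟨l, zr_injective ?_⟩
  rw [zr_mulVec, show zr l = A⁻¹ *ᵥ zr k from funext fun j => (hl j).symm, mulVec_mulVec,
    mul_nonsing_inv _ hA, one_mulVec]

namespace IsDualCosetReps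

variable (hΩ : IsDualCosetReps M Ω)
include hΩ

lemma zero_mem : (0 : Fin d → ℝ) ∈ Ω :=
  (hΩ 0).2 ⟨⟨0, by rw [mulVec_zero, zr_zero]⟩, fun _ => ⟨le_rfl, zero_lt_one⟩⟩

lemma fract_mem {x : Fin d → ℝ} (hx : InDualLattice M x) : Int.fract ∘ x ∈ Ω := by
  refine (hΩ _).2 ⟨?_, fun i => ⟨Int.fract_nonneg _, Int.fract_lt_one _⟩⟩
  rw [show Int.fract ∘ x = x - zr (fun i => ⌊x i⌋) by rw [eq_sub_iff_add_eq', zr_floor_add_fract]]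
  exact hx.sub (inDualLattice_zr _)

lemma fract_fract_add_sub {ω : Fin d → ℝ} (hω : ω ∈ Ω) (y : Fin d → ℝ) :
    Int.fract ∘ (Int.fract ∘ (ω + y) - y) = ω := by
  funext i
  simp only [Function.comp_apply, Pi.sub_apply, Pi.add_apply, Int.fract_fract_add_sub]
  exact Int.fract_eq_self.2 (((hΩ ω).1 hω).2 i)

lemma exists_mulVec_eq (hdet : M.det ≠ 0) {k : Fin d → ℤ}
    (h : ∀ ω ∈ Ω, ∃ n : ℤ, zr k ⬝ᵥ ω = n) : ∃ l, M *ᵥ l = k := by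
  refine exists_mulVec_eq_of_dotProduct_int hdet fun x hx => ?_
  obtain ⟨n, hn⟩ := h _ (hΩ.fract_mem hx)
  refine ⟨n + k ⬝ᵥ (fun i => ⌊x i⌋), ?_⟩
  conv_lhs => rw [← zr_floor_add_fract x]
  rw [dotProduct_add, zr_dotProduct_zr, hn]
  push_cast
  ring

-- Translating by `ω₀` permutes `Ω` modulo `ℤ^d` and multiplies the sum by the character at `ω₀`.
lemma sum_expNegI_eq_zero (hdet : M.det ≠ 0) {k : Fin d → ℤ} (hk : ∀ l, M *ᵥ l ≠ k) :
    ∑ ω ∈ Ω, expNegI (2 * π * (zr k ⬝ᵥ ω)) = 0 := by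
  obtain ⟨ω₀, hω₀, hnot⟩ : ∃ ω₀ ∈ Ω, ¬ ∃ n : ℤ, zr k ⬝ᵥ ω₀ = n := by
    by_contra! h
    obtain ⟨l, hl⟩ := hΩ.exists_mulVec_eq hdet h
    exact hk l hl
  set χ := fun ω => expNegI (2 * π * (zr k ⬝ᵥ ω))
  have hdual : ∀ ω ∈ Ω, InDualLattice M ω := fun ω hω => ((hΩ ω).1 hω).1
  have hshift : χ ω₀ * ∑ ω ∈ Ω, χ ω = ∑ ω ∈ Ω, χ ω :=
    calc χ ω₀ * ∑ ω ∈ Ω, χ ω = ∑ ω ∈ Ω, χ (Int.fract ∘ (ω + ω₀)) := by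
          rw [Finset.mul_sum]
          refine Finset.sum_congr rfl fun ω _ => ?_
          simp only [χ]
          rw [expNegI_two_pi_dotProduct_fract, dotProduct_add, mul_add, expNegI_add, mul_comm]
      _ = ∑ ω ∈ Ω, χ ω := by
          refine Finset.sum_nbij' (fun ω => Int.fract ∘ (ω + ω₀))
            (fun ω => Int.fract ∘ (ω - ω₀)) (fun ω hω => ?_) (fun ω hω => ?_)
            (fun ω hω => ?_) (fun ω hω => ?_) (fun _ _ => rfl)
          · exact hΩ.fract_mem ((hdual ω hω).add (hdual ω₀ hω₀))
          · exact hΩ.fract_mem ((hdual ω hω).sub (hdual ω₀ hω₀))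
          · exact hΩ.fract_fract_add_sub hω ω₀
          · simpa [sub_eq_add_neg] using hΩ.fract_fract_add_sub hω (-ω₀)
  have hχ : χ ω₀ ≠ 1 := fun h => hnot ((expNegI_two_pi_mul_eq_one_iff _).1 h)
  exact (mul_left_eq_self₀.1 hshift).resolve_left hχ

end IsDualCosetReps

end DualLattice

section Fourier

variable {d : ℕ} {a : (Fin d → ℤ) → ℂ}

lemma fhat_eq_sum (ha : (Function.support a).Finite) (ξ : Fin d → ℝ) :
    fhat a ξ = ∑ k ∈ ha.toFinset, a k * expNegI (zr k ⬝ᵥ ξ) :=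
  tsum_eq_sum' (by rw [ha.coe_toFinset]; exact Function.support_mul_subset_left _ _)

lemma contDiff_fhat (ha : (Function.support a).Finite) {n : WithTop ℕ∞} :
    ContDiff ℝ n (fhat a) := by
  rw [funext (fhat_eq_sum ha)]
  refine ContDiff.sum fun k _ => contDiff_const.mul (ContDiff.cexp
    (contDiff_const.mul (Complex.ofRealCLM.contDiff.comp ?_)))
  show ContDiff ℝ n fun x : Fin d → ℝ => ∑ i, zr k i * x i
  fun_prop

end Fourier

lemma IsDualCosetReps.sum_fhat_add_two_pi_smul {d : ℕ} {M : Matrix (Fin d) (Fin d) ℤ}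
    {Ω : Finset (Fin d → ℝ)} (hΩ : IsDualCosetReps M Ω) (hdet : M.det ≠ 0)
    {a : (Fin d → ℤ) → ℂ} (ha : (Function.support a).Finite)
    (hvanish : ∀ l ≠ 0, a (M *ᵥ l) = 0) (ξ : Fin d → ℝ) :
    ∑ ω ∈ Ω, fhat a (ξ + (2 * π) • ω) = a 0 * Ω.card := by
  calc ∑ ω ∈ Ω, fhat a (ξ + (2 * π) • ω)
      = ∑ ω ∈ Ω, ∑ k ∈ ha.toFinset,
          a k * expNegI (zr k ⬝ᵥ ξ) * expNegI (2 * π * (zr k ⬝ᵥ ω)) := by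
        simp only [fhat_eq_sum ha, dotProduct_add, dotProduct_smul, smul_eq_mul, expNegI_add,
          mul_assoc]
    _ = ∑ k ∈ ha.toFinset,
          a k * expNegI (zr k ⬝ᵥ ξ) * ∑ ω ∈ Ω, expNegI (2 * π * (zr k ⬝ᵥ ω)) := by
        rw [Finset.sum_comm]
        exact Finset.sum_congr rfl fun k _ => (Finset.mul_sum _ _ _).symm
    _ = a 0 * Ω.card := by
        rw [Finset.sum_eq_single 0]
        · simp [zr_zero, expNegI_zero]
        · intro k _ hk0
          by_cases hk : ∃ l, M *ᵥ l = k
          · obtain ⟨l, rfl⟩ := hk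
            rw [hvanish l (by rintro rfl; exact hk0 (mulVec_zero M)), zero_mul, zero_mul]
          · rw [hΩ.sum_expNegI_eq_zero hdet (not_exists.1 hk), mul_zero]
        · intro h0
          rw [ha.mem_toFinset, Function.mem_support, not_not] at h0
          simp [h0]

lemma iteratedFDeriv_sum_comp_add_right {𝕜 E F ι : Type*} [NontriviallyNormedField 𝕜]
    [NormedAddCommGroup E] [NormedSpace 𝕜 E] [NormedAddCommGroup F] [NormedSpace 𝕜 F]
    {f : E → F} {n : ℕ} (hf : ContDiff 𝕜 n f) (s : Finset ι) (v : ι → E) (x : E) :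
    iteratedFDeriv 𝕜 n (fun y => ∑ i ∈ s, f (y + v i)) x
      = ∑ i ∈ s, iteratedFDeriv 𝕜 n f (x + v i) := by
  rw [iteratedFDeriv_fun_sum_apply (f := fun i y => f (y + v i)) fun i _ =>
    (hf.comp (contDiff_id.add contDiff_const)).contDiffAt]
  exact Finset.sum_congr rfl fun i _ => iteratedFDeriv_comp_add_right n (v i) x

/-- an interpolatory filter with `m` sum rules has `m` linear-phase moments. -/
theorem stmt1 {d : ℕ} (M : Matrix (Fin d) (Fin d) ℤ) (hM : IsDilation M)
    (a : (Fin d → ℤ) → ℂ) (ha : (Function.support a).Finite)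
    (hint : Interp M a) (ha0 : fhat a 0 = 1)
    (Ω : Finset (Fin d → ℝ))
    (hΩ : ∀ x : Fin d → ℝ, x ∈ Ω ↔
      ((∃ k : Fin d → ℤ, (Mr M)ᵀ.mulVec x = zr k) ∧ ∀ i, 0 ≤ x i ∧ x i < 1))
    (m : ℕ)
    (hsr : ∀ ω ∈ Ω, ω ≠ 0 → ∀ n < m,
      iteratedFDeriv ℝ n (fhat a) ((2 * Real.pi) • ω) = 0) :
    ∀ n < m, iteratedFDeriv ℝ n (fun ξ => fhat a ξ - 1) (0 : Fin d → ℝ) = 0 := by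
  intro n hn
  have hreps : IsDualCosetReps M Ω := hΩ
  have hvanish : ∀ l ≠ 0, a (M *ᵥ l) = 0 := fun l hl => by simp [hint l, hl]
  have hperiodic := hreps.sum_fhat_add_two_pi_smul hM.1 ha hvanish
  have hsr' : ∀ ω ∈ Ω.erase 0, ∀ n < m, iteratedFDeriv ℝ n (fhat a) ((2 * π) • ω) = 0 :=
    fun ω hω => hsr ω (Finset.mem_of_mem_erase hω) (Finset.ne_of_mem_erase hω)
  have hzeros : ∀ ω ∈ Ω.erase 0, fhat a ((2 * π) • ω) = 0 := fun ω hω => norm_eq_zero.1 <| by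
    rw [← norm_iteratedFDeriv_zero (𝕜 := ℝ), hsr' ω hω 0 (by omega), norm_zero]
  have hone : a 0 * Ω.card = 1 := by
    rw [← hperiodic 0, ← Finset.add_sum_erase _ _ hreps.zero_mem]
    simp [Finset.sum_eq_zero hzeros, ha0]
  have hid : (fun ξ => fhat a ξ - 1) = -fun ξ => ∑ ω ∈ Ω.erase 0, fhat a (ξ + (2 * π) • ω) := by
    funext ξ
    rw [Pi.neg_apply, ← hone, ← hperiodic ξ, ← Finset.add_sum_erase _ _ hreps.zero_mem]
    simp
  rw [hid, iteratedFDeriv_neg_apply, iteratedFDeriv_sum_comp_add_right (contDiff_fhat ha),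
    Finset.sum_eq_zero fun ω hω => by rw [zero_add]; exact hsr' ω hω n hn, neg_zero]
end
end

section
/- Let $A$ be a finitely supported filter on $\mathbb{Z}^d$ with $\widehat{A}(\xi) = \overline{\widehat{A}(\xi)}$ for all $\xi\in\mathbb{R}^d$ and $\widehat{A}(\xi)=O(\|\xi\|^{2m})$ as $\xi\to0$ for some $m\in\mathbb{N}_0$. Then there exist finitely supported filters $u_1,\dots,u_t$ and signs $\epsilon_1,\dots,\epsilon_t\in\{-1,1\}$ such that $\widehat{A}(\xi)=\sum_{l=1}^t \epsilon_l |\widehat{u_l}(\xi)|^2$ for all $\xi\in\mathbb{R}^d$, and $\widehat{u_l}(\xi)=O(\|\xi\|^m)$ as $\xi\to0$ for every $l$. -/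
open scoped BigOperators Classical
open Asymptotics Filter Matrix

noncomputable section

/-!
Regard filters as elements of the group algebra `ℂ[ℤ^d]`, on which `u ↦ û(ξ)` is a character, and
let `J` be its augmentation ideal, generated by the differences `δ_j = e_j - 1`. The filters with
`û = O(‖ξ‖^n)` form exactly the ideal `J^n`. One inclusion holds because `û` is smooth and
`û(0) = 0` on `J`. For the other, modulo `J^(n+1)` an element of `J^n` is a combination
`∑ β_j ∏ δ_(j t)` of degree-`n` monomials; as `t⁻¹ δ̂_k(tξ) → -iξ_k` when `t → 0`, vanishing to order
`n+1` forces the form `∑ β_j ∏ ξ_(j t)` to vanish on `ℝ^d`, so it is the zero polynomial and the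
combination is `0`.

Hence `A ∈ J^m · J^m`. For `x, y ∈ J^m` the reflected conjugate `y*` of `y` lies in `J^m` and
`(x y)^ = x̂ · conj ŷ*`, so `Re (x y)^ = |(x̂ + ŷ*)/2|² - |(x̂ - ŷ*)/2|²`. Summing over products
gives the signed sum of squares for `Re Â`, which is `Â`.
-/

namespace QuasiTight

open Complex ComplexConjugate Topology

variable {d : ℕ}

abbrev FilterAlgebra (d : ℕ) := AddMonoidAlgebra ℂ (Fin d → ℤ)

def phase (ξ : Fin d → ℝ) (k : Fin d → ℤ) : ℂ :=
  exp (-I * ((∑ i, (k i : ℝ) * ξ i : ℝ) : ℂ))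

lemma phase_zero_left (k : Fin d → ℤ) : phase 0 k = 1 := by
  simp [phase]

lemma phase_zero_right (ξ : Fin d → ℝ) : phase ξ 0 = 1 := by
  simp [phase]

lemma phase_add (ξ : Fin d → ℝ) (k k' : Fin d → ℤ) :
    phase ξ (k + k') = phase ξ k * phase ξ k' := by
  simp only [phase, ← exp_add, Pi.add_apply, Int.cast_add, add_mul, Finset.sum_add_distrib]
  push_cast
  ring_nf

lemma phase_neg (ξ : Fin d → ℝ) (k : Fin d → ℤ) : phase ξ (-k) = conj (phase ξ k) := by
  simp [phase, ← Complex.exp_conj]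

def phaseChar (ξ : Fin d → ℝ) : Multiplicative (Fin d → ℤ) →* ℂ where
  toFun k := phase ξ k.toAdd
  map_one' := phase_zero_right ξ
  map_mul' _ _ := phase_add ξ _ _

def symbol (ξ : Fin d → ℝ) : FilterAlgebra d →ₐ[ℂ] ℂ :=
  AddMonoidAlgebra.lift ℂ ℂ _ (phaseChar ξ)

lemma symbol_single (ξ : Fin d → ℝ) (k : Fin d → ℤ) (c : ℂ) :
    symbol ξ (AddMonoidAlgebra.single k c) = c * phase ξ k :=
  AddMonoidAlgebra.lift_single _ _ _

lemma symbol_apply (ξ : Fin d → ℝ) (f : FilterAlgebra d) :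
    symbol ξ f = ∑ k ∈ f.coeff.support, f.coeff k * phase ξ k :=
  AddMonoidAlgebra.lift_apply _ _

lemma fhat_coeff (f : FilterAlgebra d) (ξ : Fin d → ℝ) : fhat f.coeff ξ = symbol ξ f := by
  rw [fhat, symbol_apply, tsum_eq_sum (s := f.coeff.support)]
  · rfl
  · intro k hk
    simp [Finsupp.notMem_support_iff.1 hk]

lemma differentiable_symbol (f : FilterAlgebra d) : Differentiable ℝ fun ξ => symbol ξ f := by
  simp only [symbol_apply, phase]
  fun_prop

def reflect : FilterAlgebra d →+* FilterAlgebra d :=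
  (AddMonoidAlgebra.mapRingHom _ (starRingEnd ℂ)).comp
    (AddMonoidAlgebra.mapDomainRingHom ℂ (-AddMonoidHom.id _))

lemma symbol_reflect (ξ : Fin d → ℝ) (f : FilterAlgebra d) :
    symbol ξ (reflect f) = conj (symbol ξ f) := by
  suffices (symbol ξ : FilterAlgebra d →+* ℂ).comp reflect = (starRingEnd ℂ).comp (symbol ξ) from
    congr($this f)
  refine AddMonoidAlgebra.ringHom_ext (fun c => ?_) (fun k => ?_) <;>
    simp [reflect, symbol_single, phase_zero_right, phase_neg]

lemma isBigO_symbol_one (f : FilterAlgebra d) :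
    (fun ξ : Fin d → ℝ => symbol ξ f) =O[𝓝 0] fun _ => (1 : ℝ) :=
  ((differentiable_symbol f).continuous.tendsto 0).isBigO_one ℝ

def vanishingIdeal (d n : ℕ) : Ideal (FilterAlgebra d) where
  carrier := {f | (fun ξ : Fin d → ℝ => symbol ξ f) =O[𝓝 0] fun ξ => ‖ξ‖ ^ n}
  add_mem' {f g} hf hg := by
    simpa only [Set.mem_ofPred_eq, map_add] using hf.add hg
  zero_mem' := by simpa using isBigO_zero _ _
  smul_mem' c f hf := by
    simpa only [Set.mem_ofPred_eq, smul_eq_mul, map_mul, one_mul] using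
      (isBigO_symbol_one c).mul hf

lemma mem_vanishingIdeal {n : ℕ} {f : FilterAlgebra d} :
    f ∈ vanishingIdeal d n ↔ (fun ξ : Fin d → ℝ => symbol ξ f) =O[𝓝 0] fun ξ => ‖ξ‖ ^ n :=
  Iff.rfl

lemma vanishingIdeal_mul_le (a b : ℕ) :
    vanishingIdeal d a * vanishingIdeal d b ≤ vanishingIdeal d (a + b) :=
  Ideal.mul_le.2 fun f hf g hg => by
    simpa only [mem_vanishingIdeal, map_mul, pow_add] using hf.mul hg

lemma vanishingIdeal_antitone {a b : ℕ} (hab : a ≤ b) :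
    vanishingIdeal d b ≤ vanishingIdeal d a := by
  refine fun f hf => hf.trans (IsBigO.of_bound 1 ?_)
  filter_upwards [Metric.closedBall_mem_nhds (0 : Fin d → ℝ) one_pos] with ξ hξ
  rw [mem_closedBall_zero_iff] at hξ
  simpa [abs_of_nonneg (norm_nonneg ξ)] using pow_le_pow_of_le_one (norm_nonneg ξ) hξ hab

lemma reflect_mem_vanishingIdeal {n : ℕ} {f : FilterAlgebra d} (hf : f ∈ vanishingIdeal d n) :
    reflect f ∈ vanishingIdeal d n := by
  rw [mem_vanishingIdeal] at hf ⊢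
  simp only [symbol_reflect]
  exact (hf.norm_left.congr_left fun ξ => (RCLike.norm_conj _).symm).of_norm_left

def augIdeal (d : ℕ) : Ideal (FilterAlgebra d) := RingHom.ker (symbol (0 : Fin d → ℝ))

def delta (j : Fin d) : FilterAlgebra d := AddMonoidAlgebra.single (Pi.single j 1) 1 - 1

lemma symbol_delta (ξ : Fin d → ℝ) (j : Fin d) : symbol ξ (delta j) = exp (-I * ξ j) - 1 := by
  simp [delta, symbol_single, phase, Pi.single_apply]

def translationSubgroup (I : Ideal (FilterAlgebra d)) : AddSubgroup (Fin d → ℤ) where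
  carrier := {k | AddMonoidAlgebra.single k 1 - 1 ∈ I}
  zero_mem' := by simp [← AddMonoidAlgebra.one_def]
  add_mem' {k k'} hk hk' := by
    have h : (AddMonoidAlgebra.single (k + k') 1 : FilterAlgebra d) - 1 =
        AddMonoidAlgebra.single k 1 * (AddMonoidAlgebra.single k' 1 - 1) +
          (AddMonoidAlgebra.single k 1 - 1) := by
      rw [mul_sub, AddMonoidAlgebra.single_mul_single, mul_one, mul_one]
      ring
    simpa only [Set.mem_ofPred_eq, h] using I.add_mem (I.mul_mem_left _ hk') hk
  neg_mem' {k} hk := by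
    have h : (AddMonoidAlgebra.single (-k) 1 : FilterAlgebra d) - 1 =
        -(AddMonoidAlgebra.single (-k) 1 * (AddMonoidAlgebra.single k 1 - 1)) := by
      rw [mul_sub, AddMonoidAlgebra.single_mul_single, neg_add_cancel, mul_one, mul_one,
        ← AddMonoidAlgebra.one_def]
      ring
    simpa only [Set.mem_ofPred_eq, h] using I.neg_mem (I.mul_mem_left _ hk)

lemma single_sub_one_mem_span_delta (k : Fin d → ℤ) :
    AddMonoidAlgebra.single k 1 - 1 ∈ Ideal.span (Set.range (delta (d := d))) := by
  suffices k ∈ translationSubgroup (Ideal.span (Set.range (delta (d := d)))) from this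
  rw [← Finset.univ_sum_single k]
  refine AddSubgroup.sum_mem _ fun j _ => ?_
  have hj : Pi.single j 1 ∈ translationSubgroup (Ideal.span (Set.range (delta (d := d)))) :=
    Ideal.subset_span ⟨j, rfl⟩
  convert zsmul_mem hj (k j)
  simp [← Pi.single_smul]

lemma augIdeal_eq_span : augIdeal d = Ideal.span (Set.range delta) := by
  set J := Ideal.span (Set.range (delta (d := d)))
  refine le_antisymm (fun f hf => ?_) (Ideal.span_le.2 ?_)
  · -- modulo `J` every `e_k` is `1`, so the quotient map factors through `symbol 0`
    have hmk : Ideal.Quotient.mkₐ ℂ J = (Algebra.ofId ℂ _).comp (symbol 0) := by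
      refine AddMonoidAlgebra.algHom_ext (fun k => ?_) (Subsingleton.elim _ _)
      rw [AlgHom.comp_apply, symbol_single, phase_zero_left, one_mul, map_one,
        Ideal.Quotient.mkₐ_eq_mk, ← map_one (Ideal.Quotient.mk J), Ideal.Quotient.eq]
      exact single_sub_one_mem_span_delta k
    rw [← Ideal.Quotient.eq_zero_iff_mem, ← Ideal.Quotient.mkₐ_eq_mk ℂ, hmk, AlgHom.comp_apply,
      RingHom.mem_ker.1 hf, map_zero]
  · rintro _ ⟨j, rfl⟩
    simp [augIdeal, symbol_delta]

lemma span_range_pow {R ι : Type*} [CommSemiring R] (v : ι → R) (n : ℕ) :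
    Ideal.span (Set.range v) ^ n = Ideal.span (Set.range fun j : Fin n → ι => ∏ t, v (j t)) := by
  refine (Submodule.span_pow _ n).trans (congrArg _ (Set.ext fun a => ?_))
  simp only [Set.mem_pow, List.prod_ofFn, Set.mem_range]
  constructor
  · rintro ⟨f, rfl⟩
    choose j hj using fun t => (f t).2
    exact ⟨j, by simp only [hj]⟩
  · rintro ⟨j, rfl⟩
    exact ⟨fun t => ⟨v (j t), j t, rfl⟩, rfl⟩

lemma augIdeal_pow_eq_span (n : ℕ) :
    augIdeal d ^ n = Ideal.span (Set.range fun j : Fin n → Fin d => ∏ t, delta (j t)) := by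
  rw [augIdeal_eq_span, span_range_pow]

lemma augIdeal_le_vanishingIdeal_one : augIdeal d ≤ vanishingIdeal d 1 := fun f hf => by
  have h := ((differentiable_symbol f) 0).isBigO_sub
  simp only [RingHom.mem_ker.1 hf, sub_zero] at h
  simpa only [mem_vanishingIdeal, pow_one] using h.norm_right

lemma augIdeal_pow_le_vanishingIdeal (n : ℕ) : augIdeal d ^ n ≤ vanishingIdeal d n := by
  induction n with
  | zero => exact fun f _ => by simpa [mem_vanishingIdeal] using isBigO_symbol_one f
  | succ n ih =>
    rw [pow_succ]
    exact (Ideal.mul_mono ih augIdeal_le_vanishingIdeal_one).trans (vanishingIdeal_mul_le n 1)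

lemma tendsto_symbol_smul_delta (ξ : Fin d → ℝ) (j : Fin d) :
    Tendsto (fun t : ℝ => (t : ℂ)⁻¹ * symbol (t • ξ) (delta j)) (𝓝[≠] 0) (𝓝 (-I * ξ j)) := by
  have h : HasDerivAt (fun t : ℝ => exp (-I * ξ j * t)) (-I * ξ j) 0 := by
    simpa using (((hasDerivAt_id (0 : ℂ)).const_mul (-I * ξ j)).cexp).comp_ofReal
  refine h.tendsto_slope_zero.congr fun t => ?_
  simp only [symbol_delta, zero_add, ofReal_zero, mul_zero, exp_zero, Complex.real_smul,
    Pi.smul_apply, smul_eq_mul, ofReal_mul, ofReal_inv]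
  ring_nf

lemma tendsto_symbol_smul_of_mem_vanishingIdeal {n : ℕ} {f : FilterAlgebra d}
    (hf : f ∈ vanishingIdeal d (n + 1)) (ξ : Fin d → ℝ) :
    Tendsto (fun t : ℝ => (t : ℂ)⁻¹ ^ n * symbol (t • ξ) f) (𝓝[≠] 0) (𝓝 0) := by
  obtain ⟨C, hC⟩ := hf.bound
  have hsmul : Tendsto (fun t : ℝ => t • ξ) (𝓝[≠] 0) (𝓝 0) := by
    simpa using ((tendsto_id (x := 𝓝 (0 : ℝ))).smul_const ξ).mono_left nhdsWithin_le_nhds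
  have hlim : Tendsto (fun t : ℝ => C * ‖ξ‖ ^ (n + 1) * |t|) (𝓝[≠] 0) (𝓝 0) := by
    simpa using ((continuous_abs.tendsto 0).const_mul (C * ‖ξ‖ ^ (n + 1))).mono_left
      nhdsWithin_le_nhds
  refine squeeze_zero_norm' ?_ hlim
  filter_upwards [hsmul.eventually hC, self_mem_nhdsWithin] with t ht ht_ne
  have ht0 : |t| ≠ 0 := abs_ne_zero.2 ht_ne
  calc ‖(t : ℂ)⁻¹ ^ n * symbol (t • ξ) f‖ ≤ (|t| ^ n)⁻¹ * (C * (|t| * ‖ξ‖) ^ (n + 1)) := by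
        rw [norm_mul, norm_pow, norm_inv, norm_real, Real.norm_eq_abs, inv_pow]
        refine mul_le_mul_of_nonneg_left ?_ (by positivity)
        simpa [norm_smul] using ht
    _ = C * ‖ξ‖ ^ (n + 1) * |t| := by
        field_simp
        ring

lemma sum_smul_prod_eq_zero {R σ : Type*} [CommRing R] [Algebra ℂ R] [Fintype σ] {n : ℕ}
    (β : (Fin n → σ) → ℂ)
    (h : ∀ ξ : σ → ℝ, ∑ j, β j * ∏ t, (ξ (j t) : ℂ) = 0) (v : σ → R) :
    ∑ j, β j • ∏ t, v (j t) = 0 := by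
  set P : MvPolynomial σ ℂ := ∑ j, β j • ∏ t, MvPolynomial.X (j t)
  have hP : P = 0 := by
    refine MvPolynomial.funext_set (fun _ => Set.range ofReal)
      (fun _ => Set.infinite_range_of_injective ofReal_injective) fun x hx => ?_
    choose ξ hξ using fun i => hx i (Set.mem_univ i)
    simpa [P, ← hξ] using h ξ
  simpa [P] using congrArg (MvPolynomial.aeval v) hP

lemma sum_smul_prod_delta_eq_zero {n : ℕ} (β : (Fin n → Fin d) → ℂ)
    (hβ : ∑ j, β j • ∏ t, delta (j t) ∈ vanishingIdeal d (n + 1)) :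
    ∑ j, β j • ∏ t, delta (j t) = 0 := by
  refine sum_smul_prod_eq_zero β (fun ξ => ?_) delta
  have hlim : Tendsto (fun t : ℝ => (t : ℂ)⁻¹ ^ n * symbol (t • ξ) (∑ j, β j • ∏ t, delta (j t)))
      (𝓝[≠] 0) (𝓝 ((-I) ^ n * ∑ j, β j * ∏ t, (ξ (j t) : ℂ))) := by
    have h := tendsto_finsetSum Finset.univ fun j _ =>
      (tendsto_finsetProd Finset.univ fun t _ => tendsto_symbol_smul_delta ξ (j t)).const_mul (β j)
    convert h using 1
    · ext t
      simp only [map_sum, map_smul, map_prod, smul_eq_mul, Finset.mul_sum, Finset.prod_mul_distrib,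
        Finset.prod_const, Finset.card_univ, Fintype.card_fin]
      ring_nf
    · simp only [Finset.mul_sum, Finset.prod_mul_distrib, Finset.prod_const, Finset.card_univ,
        Fintype.card_fin]
      ring_nf
  have h0 := tendsto_nhds_unique hlim (tendsto_symbol_smul_of_mem_vanishingIdeal hβ ξ)
  simpa [I_ne_zero] using h0

lemma mem_augIdeal_pow_succ {n : ℕ} {f : FilterAlgebra d} (hf : f ∈ augIdeal d ^ n)
    (hv : f ∈ vanishingIdeal d (n + 1)) : f ∈ augIdeal d ^ (n + 1) := by
  rw [augIdeal_pow_eq_span, Ideal.mem_span_range_iff_exists_fun] at hf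
  obtain ⟨c, rfl⟩ := hf
  set β : (Fin n → Fin d) → ℂ := fun j => symbol 0 (c j)
  have hrest : ∑ j, (c j - algebraMap ℂ _ (β j)) * ∏ t, delta (j t) ∈ augIdeal d ^ (n + 1) := by
    refine Ideal.sum_mem _ fun j _ => ?_
    rw [pow_succ']
    refine Ideal.mul_mem_mul (RingHom.mem_ker.2 ?_) ?_
    · rw [map_sub, AlgHom.commutes, Algebra.algebraMap_self, RingHom.id_apply, sub_self]
    · rw [augIdeal_pow_eq_span]
      exact Ideal.subset_span ⟨j, rfl⟩
  have hsplit : ∑ j, c j * ∏ t, delta (j t) =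
      ∑ j, (c j - algebraMap ℂ _ (β j)) * ∏ t, delta (j t) + ∑ j, β j • ∏ t, delta (j t) := by
    simp only [sub_mul, Finset.sum_sub_distrib, Algebra.smul_def, sub_add_cancel]
  have hzero : ∑ j, β j • ∏ t, delta (j t) = 0 := by
    refine sum_smul_prod_delta_eq_zero β ?_
    rw [eq_sub_of_add_eq' hsplit.symm]
    exact sub_mem hv (augIdeal_pow_le_vanishingIdeal _ hrest)
  rwa [hsplit, hzero, add_zero]

lemma vanishingIdeal_eq_augIdeal_pow (n : ℕ) : vanishingIdeal d n = augIdeal d ^ n := by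
  refine le_antisymm ?_ (augIdeal_pow_le_vanishingIdeal n)
  induction n with
  | zero => simp
  | succ n ih =>
    exact fun f hf => mem_augIdeal_pow_succ (ih (vanishingIdeal_antitone n.le_succ hf)) hf

def IsSignedSumSq (m : ℕ) (F : (Fin d → ℝ) → ℂ) : Prop :=
  ∃ (t : ℕ) (u : Fin t → FilterAlgebra d) (ε : Fin t → ℂ), (∀ l, ε l = 1 ∨ ε l = -1) ∧
    (∀ l, u l ∈ vanishingIdeal d m) ∧
    ∀ ξ, F ξ = ∑ l, ε l * (conj (symbol ξ (u l)) * symbol ξ (u l))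

lemma IsSignedSumSq.add {m : ℕ} {F G : (Fin d → ℝ) → ℂ} (hF : IsSignedSumSq m F)
    (hG : IsSignedSumSq m G) : IsSignedSumSq m fun ξ => F ξ + G ξ := by
  obtain ⟨s, u, ε, hε, hu, hF⟩ := hF
  obtain ⟨t, v, η, hη, hv, hG⟩ := hG
  refine ⟨s + t, Fin.append u v, Fin.append ε η,
    Fin.addCases (by simpa using hε) (by simpa using hη),
    Fin.addCases (by simpa using hu) (by simpa using hv), fun ξ => ?_⟩
  simp [Fin.sum_univ_add, hF, hG]

lemma ofReal_re_mul_conj (a b : ℂ) : ((a * conj b).re : ℂ) =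
    conj (2⁻¹ * (a + b)) * (2⁻¹ * (a + b)) - conj (2⁻¹ * (a - b)) * (2⁻¹ * (a - b)) := by
  rw [re_eq_add_conj]
  simp only [map_mul, map_add, map_sub, map_inv₀, map_ofNat, conj_conj]
  ring

lemma isSignedSumSq_re_symbol {m : ℕ} {f : FilterAlgebra d}
    (hf : f ∈ vanishingIdeal d m * vanishingIdeal d m) :
    IsSignedSumSq m fun ξ => ((symbol ξ f).re : ℂ) := by
  refine Submodule.mul_induction_on hf (fun x hx y hy => ?_) (fun f g hf hg => ?_)
  · have hy' := reflect_mem_vanishingIdeal hy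
    refine ⟨2, ![(2⁻¹ : ℂ) • (x + reflect y), (2⁻¹ : ℂ) • (x - reflect y)], ![1, -1],
      fun l => ?_, fun l => ?_, fun ξ => ?_⟩
    · fin_cases l <;> simp
    · fin_cases l
      · exact Submodule.smul_of_tower_mem _ _ (add_mem hx hy')
      · exact Submodule.smul_of_tower_mem _ _ (sub_mem hx hy')
    · have hy : symbol ξ y = conj (symbol ξ (reflect y)) := by rw [symbol_reflect, conj_conj]
      show ((symbol ξ (x * y)).re : ℂ) = _
      rw [map_mul, hy, ofReal_re_mul_conj]
      simp only [Fin.sum_univ_two, Matrix.cons_val_zero, Matrix.cons_val_one, map_smul,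
        smul_eq_mul, map_add, map_sub]
      ring
  · simpa only [map_add, add_re, ofReal_add] using hf.add hg

end QuasiTight

open QuasiTight in
/-- quasi-tight factorization lemma: a Hermitian trigonometric polynomial
vanishing to order `2m` at `0` splits as `∑ ε_l |û_l|²` with each `û_l = O(‖ξ‖^m)`. -/
theorem stmt16 {d : ℕ} (A : (Fin d → ℤ) → ℂ) (hA : (Function.support A).Finite)
    (hherm : ∀ ξ : Fin d → ℝ, (starRingEnd ℂ) (fhat A ξ) = fhat A ξ)
    (m : ℕ)
    (hvan : (fun ξ : Fin d → ℝ => fhat A ξ) =O[nhds (0 : Fin d → ℝ)] fun ξ => ‖ξ‖ ^ (2 * m)) :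
    ∃ (t : ℕ) (u : Fin t → ((Fin d → ℤ) → ℂ)) (ε : Fin t → ℂ),
      (∀ l, ε l = 1 ∨ ε l = -1) ∧
      (∀ l, (Function.support (u l)).Finite) ∧
      (∀ ξ : Fin d → ℝ,
        fhat A ξ = ∑ l : Fin t, ε l * ((starRingEnd ℂ) (fhat (u l) ξ) * fhat (u l) ξ)) ∧
      (∀ l, (fun ξ : Fin d → ℝ => fhat (u l) ξ) =O[nhds (0 : Fin d → ℝ)]
        fun ξ => ‖ξ‖ ^ m) := by
  set a : FilterAlgebra d := AddMonoidAlgebra.ofCoeff (Finsupp.ofSupportFinite A hA)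
  have ha : ∀ ξ, fhat A ξ = symbol ξ a := fhat_coeff a
  have hmem : a ∈ vanishingIdeal d m * vanishingIdeal d m := by
    rw [vanishingIdeal_eq_augIdeal_pow, ← pow_add, ← two_mul, ← vanishingIdeal_eq_augIdeal_pow,
      mem_vanishingIdeal]
    simpa only [ha] using hvan
  obtain ⟨t, u, ε, hε, hu, hsum⟩ := isSignedSumSq_re_symbol hmem
  refine ⟨t, fun l => (u l).coeff, ε, hε, fun l => (u l).coeff.hasFiniteSupport, fun ξ => ?_,
    fun l => by simpa only [fhat_coeff] using mem_vanishingIdeal.1 (hu l)⟩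
  have hre : ((symbol ξ a).re : ℂ) = symbol ξ a := Complex.conj_eq_iff_re.1 (ha ξ ▸ hherm ξ)
  rw [ha, ← hre]
  simpa only [fhat_coeff] using hsum ξ
end
end
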